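/- Turing's n-ary multiple fixed-point combinators are multiple fixed-point combinators: for every n ≥ 1, every 1 ≤ k ≤ n, and all λ-terms F_1,…,F_n, (Ψ_k^n F_1 ⋯ F_n) =βη (F_k (Ψ_1^n F_1 ⋯ F_n) ⋯ (Ψ_n^n F_1 ⋯ F_n)). -/

import Mathlib

namespace LC

/-- Untyped λ-terms, de Bruijn indices. -/
inductive Tm : Type
  | var : ℕ → Tm
  | app : Tm → Tm → Tm
  | lam : Tm → Tm
  deriving DecidableEq

namespace Tm

/-- Shift the free variables ≥ c up by one. -/
def lift (c : ℕ) : Tm → Tm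
  | var n => if n < c then var n else var (n + 1)
  | app a b => app (lift c a) (lift c b)
  | lam a => lam (lift (c + 1) a)

/-- Substitute `s` for the free variable `k`. -/
def subst (k : ℕ) (s : Tm) : Tm → Tm
  | var n => if n = k then s else if k < n then var (n - 1) else var n
  | app a b => app (subst k s a) (subst k s b)
  | lam a => lam (subst (k + 1) (lift 0 s) a)

/-- One-step βη-reduction (with congruence closure). -/
inductive Step : Tm → Tm → Prop
  | beta (a b : Tm) : Step (app (lam a) b) (subst 0 b a)
  | eta (a : Tm) : Step (lam (app (lift 0 a) (var 0))) a
  | appL {a a' : Tm} (b : Tm) : Step a a' → Step (app a b) (app a' b)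
  | appR (a : Tm) {b b' : Tm} : Step b b' → Step (app a b) (app a b')
  | lamCongr {a a' : Tm} : Step a a' → Step (lam a) (lam a')

/-- βη-equivalence: the equivalence relation generated by βη-reduction. -/
def BetaEta : Tm → Tm → Prop := Relation.EqvGen Step

/-- Multi-step βη-reduction: reflexive-transitive closure of βη-reduction. -/
def Reduces : Tm → Tm → Prop := Relation.ReflTransGen Step

/-- I = λx.x -/
def I : Tm := lam (var 0)
/-- K = λxy.x -/
def K : Tm := lam (lam (var 1))
/-- B = λxyz.(x (y z)) -/
def B : Tm := lam (lam (lam (app (var 2) (app (var 1) (var 0)))))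
/-- C = λxyz.(x z y) -/
def C : Tm := lam (lam (lam (app (app (var 2) (var 0)) (var 1))))
/-- S = λxyz.(x z (y z)) -/
def S : Tm := lam (lam (lam (app (app (var 2) (var 0)) (app (var 1) (var 0)))))

/-- body of the n-th Church numeral: s (s ⋯ (s z)⋯), n times. -/
def churchBody : ℕ → Tm
  | 0 => var 0
  | n + 1 => app (var 1) (churchBody n)

/-- The n-th Church numeral c_n = λsz.(s (s ⋯ (s z)⋯)). -/
def church (n : ℕ) : Tm := lam (lam (churchBody n))

/-- n nested λ-abstractions. -/
def lamN : ℕ → Tm → Tm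
  | 0, t => t
  | n + 1, t => lam (lamN n t)

/-- Shift all free variables up by n. -/
def liftN (n : ℕ) (t : Tm) : Tm := (lift 0)^[n] t

/-- t (var (a+k-1)) ⋯ (var (a+1)) (var a) : left-associated application of t
to k variables with descending indices. -/
def appVars (t : Tm) (a k : ℕ) : Tm :=
  ((List.range k).reverse).foldl (fun s i => app s (var (a + i))) t

/-- t (var a) (var (a+1)) ⋯ (var (a+k-1)) : left-associated application of t
to k variables with ascending indices. -/
def appVarsAsc (t : Tm) (a k : ℕ) : Tm :=
  (List.range k).foldl (fun s i => app s (var (a + i))) t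

/-- Left-associated application of t to a list of terms. -/
def appList (t : Tm) (l : List Tm) : Tm := l.foldl app t

/-- K_n = λp x_1…x_n. p -/
def Kn (n : ℕ) : Tm := lamN (n + 1) (var n)
/-- S_n = λpq x_1…x_n.(p x_1⋯x_n (q x_1⋯x_n)) -/
def Sn (n : ℕ) : Tm :=
  lamN (n + 2) (app (appVars (var (n + 1)) 0 n) (appVars (var n) 0 n))
/-- B_n = λpq x_1…x_n.(p (q x_1⋯x_n)) -/
def Bn (n : ℕ) : Tm := lamN (n + 2) (app (var (n + 1)) (appVars (var n) 0 n))
/-- C_n = λpq x_1…x_n.(p x_1⋯x_n q) -/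
def Cn (n : ℕ) : Tm := lamN (n + 2) (app (appVars (var (n + 1)) 0 n) (var n))


/-- V_j = λx_1…x_n f_1…f_n.(f_j (x_1 x_1 ⋯ x_n f_1 ⋯ f_n) ⋯ (x_n x_1 ⋯ x_n f_1 ⋯ f_n)).
Under the 2n binders, x_i = var (2n - i) and f_j = var (n - j). -/
def V (n j : ℕ) : Tm :=
  lamN (2 * n) (((List.range n).reverse).foldl
    (fun s i => app s (appVars (appVars (var (n + i)) n n) 0 n)) (var (n - j)))

/-- Turing's n-ary multiple fixed-point combinator Ψ_k^n = (V_k V_1 ⋯ V_n). -/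
def Psi (n k : ℕ) : Tm :=
  appList (V n k) ((List.range n).map fun i => V n (i + 1))

/-! Applying `V_k` to `V_1, …, V_n, F_1, …, F_n` fires its `2n` abstractions at once and leaves
`F_k (V_1 V⃗ F⃗) ⋯ (V_n V⃗ F⃗)`. Since `Ψ_j^n F⃗ = V_j V⃗ F⃗`, this is `F_k (Ψ_1^n F⃗) ⋯ (Ψ_n^n F⃗)`,
reached from `Ψ_k^n F⃗` by β-reduction alone. -/

theorem lift_lift (t : Tm) {c c' : ℕ} (h : c' ≤ c) :
    lift (c + 1) (lift c' t) = lift c' (lift c t) := by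
  induction t generalizing c c' with
  | var m =>
    simp only [lift]; split_ifs <;> simp only [lift] <;> split_ifs <;> simp only [var.injEq] <;> omega
  | app a b iha ihb => simp only [lift, iha h, ihb h]
  | lam a iha => simp only [lift, iha (Nat.succ_le_succ h)]

theorem subst_lift (t s : Tm) (k : ℕ) : subst k s (lift k t) = t := by
  induction t generalizing k s with
  | var m =>
    simp only [lift]; split_ifs <;> simp only [subst] <;> split_ifs <;> first | rfl | omega
  | app a b iha ihb => simp only [lift, subst, iha, ihb]
  | lam a iha => simp only [lift, subst, iha]

theorem liftN_succ (m : ℕ) (t : Tm) : liftN (m + 1) t = lift 0 (liftN m t) :=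
  Function.iterate_succ_apply' _ _ _

theorem liftN_succ' (m : ℕ) (t : Tm) : liftN (m + 1) t = liftN m (lift 0 t) :=
  Function.iterate_succ_apply _ _ _

theorem lift_liftN (t : Tm) {j m : ℕ} (h : j ≤ m) : lift j (liftN m t) = liftN (m + 1) t := by
  induction j generalizing m with
  | zero => rw [liftN_succ]
  | succ j ih =>
    obtain ⟨m, rfl⟩ : ∃ m', m = m' + 1 := ⟨m - 1, by omega⟩
    rw [liftN_succ, lift_lift _ (Nat.zero_le j), ih (m := m) (by omega), ← liftN_succ]

theorem subst_liftN (t s : Tm) {j m : ℕ} (h : j < m) : subst j s (liftN m t) = liftN (m - 1) t := by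
  obtain ⟨m, rfl⟩ : ∃ m', m = m' + 1 := ⟨m - 1, by omega⟩
  rw [← lift_liftN t (show j ≤ m by omega), subst_lift, Nat.add_sub_cancel]

theorem subst_lamN (m k : ℕ) (s t : Tm) :
    subst k s (lamN m t) = lamN m (subst (k + m) (liftN m s) t) := by
  induction m generalizing k s with
  | zero => rfl
  | succ m ih => simp only [lamN, subst, ih, ← liftN_succ', Nat.add_right_comm k 1 m, Nat.add_assoc]

theorem appList_append (t : Tm) (l₁ l₂ : List Tm) :
    appList t (l₁ ++ l₂) = appList (appList t l₁) l₂ :=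
  List.foldl_append

/-- `substList [a₁, …, aₘ] t` is what remains of `(λ…λ t) a₁ ⋯ aₘ` (with `m` binders) after `m`
β-steps: the variable `i < m` is replaced by `a_{m-i}`, the others are lowered by `m`. -/
def substList : List Tm → Tm → Tm
  | [], t => t
  | a :: l, t => substList l (subst l.length (liftN l.length a) t)

theorem substList_app (l : List Tm) (a b : Tm) :
    substList l (app a b) = app (substList l a) (substList l b) := by
  induction l generalizing a b with
  | nil => rfl
  | cons x l ih => simp only [substList, subst, ih]

theorem substList_appList (l : List Tm) (t : Tm) (ts : List Tm) :
    substList l (appList t ts) = appList (substList l t) (ts.map (substList l)) := by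
  induction ts generalizing t with
  | nil => rfl
  | cons a ts ih => simp only [appList, List.foldl_cons, List.map_cons] at ih ⊢; rw [ih, substList_app]

theorem substList_liftN (l : List Tm) (t : Tm) : substList l (liftN l.length t) = t := by
  induction l with
  | nil => rfl
  | cons x l ih =>
    simp only [substList, List.length_cons]
    rw [subst_liftN _ _ (Nat.lt_succ_self _), Nat.succ_sub_one, ih]

theorem substList_var_append (l₁ l₂ : List Tm) (x : Tm) :
    substList (l₁ ++ x :: l₂) (var l₂.length) = x := by
  induction l₁ with
  | nil => simp only [List.nil_append, substList, subst, ↓reduceIte, substList_liftN]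
  | cons a l₁ ih =>
    have hlt : l₂.length < (l₁ ++ x :: l₂).length := by simp; omega
    simpa only [List.cons_append, substList, subst, if_neg hlt.ne, if_neg hlt.not_gt] using ih

theorem map_substList_var (l₁ l₂ l₃ : List Tm) :
    (List.range l₂.length).reverse.map (fun i => substList (l₁ ++ l₂ ++ l₃) (var (l₃.length + i)))
      = l₂ := by
  induction l₂ generalizing l₁ with
  | nil => rfl
  | cons x l₂ ih =>
    have hx : substList (l₁ ++ x :: (l₂ ++ l₃)) (var (l₃.length + l₂.length)) = x := by
      simpa [Nat.add_comm] using substList_var_append l₁ (l₂ ++ l₃) x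
    simpa [List.range_succ, hx] using ih (l₁ ++ [x])

theorem appVars_eq_appList (t : Tm) (a m : ℕ) :
    appVars t a m = appList t ((List.range m).reverse.map fun i => var (a + i)) :=
  (List.foldl_map ..).symm

theorem substList_appVars (l₁ l₂ l₃ : List Tm) (t : Tm) :
    substList (l₁ ++ l₂ ++ l₃) (appVars t l₃.length l₂.length)
      = appList (substList (l₁ ++ l₂ ++ l₃) t) l₂ := by
  rw [appVars_eq_appList, substList_appList, List.map_map]
  exact congrArg _ (map_substList_var l₁ l₂ l₃)

theorem Step.appList {a a' : Tm} (l : List Tm) (h : Step a a') :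
    Step (appList a l) (appList a' l) := by
  induction l generalizing a a' with
  | nil => exact h
  | cons x l ih => exact ih (Step.appL x h)

theorem reduces_appList_lamN (l : List Tm) (t : Tm) :
    Reduces (appList (lamN l.length t) l) (substList l t) := by
  induction l generalizing t with
  | nil => exact .refl
  | cons a l ih =>
    refine .head ((Step.beta _ a).appList l) ?_
    rw [subst_lamN, Nat.zero_add]
    exact ih _

theorem V_reduces {n k : ℕ} (xs fs : List Tm) (hxs : xs.length = n) (hfs : fs.length = n)
    (hk : k < n) :
    Reduces (appList (V n (k + 1)) (xs ++ fs))
      (appList (fs[k]'(by omega)) (xs.map fun x => appList x (xs ++ fs))) := by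
  set L := xs ++ fs
  have hV : V n (k + 1) = lamN L.length (appList (var (n - (k + 1)))
      ((List.range n).reverse.map fun i => appVars (appVars (var (n + i)) n n) 0 n)) := by
    rw [V, appList, List.foldl_map, List.length_append, hxs, hfs, two_mul]
  have hhead : substList L (var (n - (k + 1))) = fs[k] := by
    have hsplit : L = (xs ++ fs.take k) ++ fs[k] :: fs.drop (k + 1) := by
      rw [List.append_assoc, ← List.drop_eq_getElem_cons, List.take_append_drop]
    have hlen : (fs.drop (k + 1)).length = n - (k + 1) := by simp [hfs]
    rw [hsplit, ← hlen, substList_var_append]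
  have harg (i : ℕ) : substList L (appVars (appVars (var (n + i)) n n) 0 n)
      = appList (substList L (var (n + i))) L := by
    have hfs' := substList_appVars xs fs [] (appVars (var (n + i)) n n)
    have hxs' := substList_appVars [] xs fs (var (n + i))
    simp only [List.append_nil, List.nil_append, List.length_nil, hxs, hfs] at hfs' hxs'
    rw [hfs', hxs', ← appList_append]
  have hvars : (List.range n).reverse.map (fun i => substList L (var (n + i))) = xs := by
    simpa [hxs, hfs] using map_substList_var [] xs fs
  rw [hV]
  convert reduces_appList_lamN L _ using 1
  rw [substList_appList, List.map_map, hhead, ← hvars, List.map_map]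
  simp only [Function.comp_def, harg]

theorem turing_multiple_fixed_points_general (n k : ℕ) (hk : 1 ≤ k)
    (hkn : k ≤ n) (F : ℕ → Tm) :
    BetaEta (appList (Psi n k) ((List.range n).map fun i => F (i + 1)))
      (appList (F k) ((List.range n).map fun j =>
        appList (Psi n (j + 1)) ((List.range n).map fun i => F (i + 1)))) := by
  obtain ⟨k, rfl⟩ : ∃ k', k = k' + 1 := ⟨k - 1, by omega⟩
  set Vs := (List.range n).map fun i => V n (i + 1)
  set Fs := (List.range n).map fun i => F (i + 1)
  have hPsi (j : ℕ) : appList (Psi n j) Fs = appList (V n j) (Vs ++ Fs) :=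
    (appList_append ..).symm
  have hFk : Fs[k]'(by simp [Fs]; omega) = F (k + 1) := by simp [Fs]
  have hargs : Vs.map (fun x => appList x (Vs ++ Fs))
      = (List.range n).map fun j => appList (V n (j + 1)) (Vs ++ Fs) := List.map_map ..
  have h := V_reduces Vs Fs (by simp [Vs]) (by simp [Fs]) hkn
  rw [hFk, hargs] at h
  simp only [hPsi]
  exact Relation.EqvGen.reflTransGen_le_eqvGen Step _ _ h

/-- for n ≥ 1, 1 ≤ k ≤ n and all terms F_1,…,F_n,
(Ψ_k^n F_1 ⋯ F_n) =βη (F_k (Ψ_1^n F_1 ⋯ F_n) ⋯ (Ψ_n^n F_1 ⋯ F_n)). -/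
theorem turing_multiple_fixed_points (n k : ℕ) (hn : 1 ≤ n) (hk : 1 ≤ k)
    (hkn : k ≤ n) (F : ℕ → Tm) :
    BetaEta (appList (Psi n k) ((List.range n).map fun i => F (i + 1)))
      (appList (F k) ((List.range n).map fun j =>
        appList (Psi n (j + 1)) ((List.range n).map fun i => F (i + 1)))) :=
  turing_multiple_fixed_points_general n k hk hkn F

end Tm
end LC
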